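/- arXiv:2001.00276 — 7 statements merged into one kernel-verified Lean document; each statement's English description precedes it below -/
import Mathlib

section
/- (Proper separation theorem.) Let X be a real vector space, Ω ⊆ X convex with core(Ω) ≠ ∅, and x₀ ∈ X with x₀ ∉ Ω. Then there exists a nonzero linear function f : X → ℝ such that f(x) ≤ f(x₀) for all x ∈ Ω and f(x̄) < f(x₀) for some x̄ ∈ Ω. Moreover, in the extreme case where Ω = core(Ω), there exists a nonzero linear function f : X → ℝ with f(x) < f(x₀) for all x ∈ Ω. -/
/-!
Translate a core point `a` of `Ω` to the origin. The translate `C` is convex and absorbent, so its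
gauge is a sublinear functional, and `x₀ - a ∉ C` means this gauge is at least `1` there.
Hahn–Banach extends `t • (x₀ - a) ↦ t * gauge C (x₀ - a)` to a linear `g ≤ gauge C`, giving
`g ≤ g a + 1 ≤ g x₀` on `Ω`, strictly at `a`. If `Ω` equals its core, every `x ∈ Ω` can be pushed a
little further in the direction `x₀ - a`, along which `g` increases, so the inequality is strict.
-/

/-- The algebraic core of a set `Ω` in a real vector space. -/
def algCore {X : Type*} [AddCommGroup X] [Module ℝ X] (Ω : Set X) : Set X :=
  {x | x ∈ Ω ∧ ∀ v : X, ∃ δ > (0 : ℝ), ∀ t : ℝ, |t| < δ → x + t • v ∈ Ω}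

section

variable {X : Type*} [AddCommGroup X] [Module ℝ X]

theorem exists_pos_add_smul_mem_of_mem_algCore {Ω : Set X} {x : X} (hx : x ∈ algCore Ω)
    (v : X) : ∃ t : ℝ, 0 < t ∧ x + t • v ∈ Ω := by
  obtain ⟨δ, hδ, hδv⟩ := hx.2 v
  exact ⟨δ / 2, half_pos hδ, hδv _ (by rw [abs_of_pos (half_pos hδ)]; exact half_lt_self hδ)⟩

theorem absorbent_preimage_add_of_mem_algCore {Ω : Set X} {a : X} (ha : a ∈ algCore Ω) :
    Absorbent ℝ ((a + ·) ⁻¹' Ω) := by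
  refine absorbent_iff_eventually_nhdsNE_zero.2 fun v => eventually_nhdsWithin_of_eventually_nhds ?_
  obtain ⟨δ, hδ, hδv⟩ := ha.2 v
  exact Metric.eventually_nhds_iff.2 ⟨δ, hδ, fun t ht => hδv t (by rwa [Real.dist_0_eq_abs] at ht)⟩

theorem exists_linearMap_le_gauge_eq_gauge {C : Set X} (hC : Convex ℝ C) (hCa : Absorbent ℝ C)
    (b : X) : ∃ g : X →ₗ[ℝ] ℝ, (∀ x, g x ≤ gauge C x) ∧ g b = gauge C b := by
  have H : ∀ c : ℝ, c • b = 0 → c • gauge C b = 0 := fun c hc => by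
    rcases smul_eq_zero.1 hc with rfl | rfl
    · exact zero_smul _ _
    · rw [gauge_zero, smul_zero]
  set f := LinearPMap.mkSpanSingleton' (σ := RingHom.id ℝ) b (gauge C b) H
  have hf : ∀ x : f.domain, f x ≤ gauge C x := by
    rintro ⟨x, hx⟩
    obtain ⟨t, rfl⟩ := Submodule.mem_span_singleton.1 hx
    rw [LinearPMap.mkSpanSingleton'_apply]
    rcases le_or_gt 0 t with ht | ht
    · exact (gauge_smul_of_nonneg ht b).ge
    · exact (mul_nonpos_of_nonpos_of_nonneg ht.le (gauge_nonneg b)).trans (gauge_nonneg _)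
  obtain ⟨g, hgf, hg⟩ := exists_extension_of_le_sublinear f (gauge C)
    (fun c hc x => gauge_smul_of_nonneg hc.le x) (gauge_add_le hC hCa) hf
  refine ⟨g, hg, ?_⟩
  exact (hgf ⟨b, Submodule.mem_span_singleton_self b⟩).trans
    (LinearPMap.mkSpanSingleton'_apply_self (σ := RingHom.id ℝ) b (gauge C b) H _)

theorem exists_linearMap_le_one_of_notMem {C : Set X} (hC : Convex ℝ C)
    (hCa : Absorbent ℝ C) {b : X} (hb : b ∉ C) :
    ∃ g : X →ₗ[ℝ] ℝ, (∀ x ∈ C, g x ≤ 1) ∧ 1 ≤ g b := by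
  obtain ⟨g, hg, hgb⟩ := exists_linearMap_le_gauge_eq_gauge hC hCa b
  refine ⟨g, fun x hx => (hg x).trans (gauge_le_one_of_mem hx), hgb ▸ ?_⟩
  exact one_le_gauge_of_notMem (hC.starConvex hCa.zero_mem) (hCa b) hb

end

theorem proper_separation {X : Type*} [AddCommGroup X] [Module ℝ X]
    (Ω : Set X) (hΩ : Convex ℝ Ω) (hcore : (algCore Ω).Nonempty)
    (x₀ : X) (hx₀ : x₀ ∉ Ω) :
    (∃ f : X →ₗ[ℝ] ℝ, f ≠ 0 ∧ (∀ x ∈ Ω, f x ≤ f x₀) ∧ ∃ xb ∈ Ω, f xb < f x₀) ∧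
    (algCore Ω = Ω → ∃ f : X →ₗ[ℝ] ℝ, f ≠ 0 ∧ ∀ x ∈ Ω, f x < f x₀) := by
  obtain ⟨a, ha⟩ := hcore
  obtain ⟨g, hgΩ, hgx₀⟩ := exists_linearMap_le_one_of_notMem
    (hΩ.translate_preimage_right a) (absorbent_preimage_add_of_mem_algCore ha)
    (b := x₀ - a) (by simpa using hx₀)
  rw [map_sub] at hgx₀
  have hle : ∀ x ∈ Ω, g x ≤ g a + 1 := fun x hx => by
    have := hgΩ (x - a) (by simpa using hx)
    rw [map_sub] at this
    linarith
  have hg : g ≠ 0 := by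
    rintro rfl
    simp only [LinearMap.zero_apply, sub_zero] at hgx₀
    exact one_ne_zero (le_antisymm hgx₀ zero_le_one)
  refine ⟨⟨g, hg, fun x hx => by linarith [hle x hx], a, ha.1, by linarith⟩,
    fun hcoreΩ => ⟨g, hg, fun x hx => ?_⟩⟩
  obtain ⟨t, ht, hxt⟩ := exists_pos_add_smul_mem_of_mem_algCore (hcoreΩ.symm ▸ hx) (x₀ - a)
  have hpushed := hle _ hxt
  rw [map_add, map_smul, map_sub, smul_eq_mul] at hpushed
  nlinarith
end

section
/- (Characterization of proper separation of a point from a convex set.) Let X be a real vector space, Ω ⊆ X convex with core(Ω) ≠ ∅, and x₀ ∈ X. Then the following are equivalent: (a) Ω and {x₀} are separated, i.e., there is a nonzero linear f : X → ℝ with f(x) ≤ f(x₀) for all x ∈ Ω; (b) Ω and {x₀} are properly separated, i.e., there is a nonzero linear f : X → ℝ with f(x) ≤ f(x₀) for all x ∈ Ω and f(x̄) < f(x₀) for some x̄ ∈ Ω; (c) x₀ ∉ core(Ω). -/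
/-!
A linear functional that is bounded above by `c` on `Ω` and attains `c` at a core point of `Ω`
must vanish, since the core point can be moved in every direction `±v` without leaving `Ω`.
This gives (a) ⇒ (b) (the core point is strictly separated) and (a) ⇒ (c) (`x₀` itself cannot be
a core point). For (c) ⇒ (a), translate a core point `a` to the origin: the translate `S` of `Ω`
is then absorbent, so its gauge is sublinear, and `gauge S (x₀ - a) ≥ 1` because every point of
gauge `< 1` is a convex combination of a point of `S` with a core point, hence lies in the core.
Hahn–Banach extends `t • (x₀ - a) ↦ t` from the line through `x₀ - a` below this gauge.
-/

open Set

section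

variable {X : Type*} [AddCommGroup X] [Module ℝ X] {Ω : Set X}

theorem mem_algCore_preimage_add_left {a y : X} :
    y ∈ algCore ((a + ·) ⁻¹' Ω) ↔ a + y ∈ algCore Ω := by
  simp only [algCore, mem_ofPred_eq, mem_preimage, add_assoc]

theorem LinearMap.apply_lt_of_mem_algCore {f : X →ₗ[ℝ] ℝ} (hf : f ≠ 0) {c : ℝ}
    (hle : ∀ x ∈ Ω, f x ≤ c) {a : X} (ha : a ∈ algCore Ω) : f a < c := by
  refine (hle a ha.1).lt_of_ne fun hac => hf ?_
  ext v
  obtain ⟨δ, hδ, hmem⟩ := ha.2 v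
  have hmul_nonpos : ∀ t : ℝ, |t| < δ → t * f v ≤ 0 := fun t ht => by
    have := hle _ (hmem t ht)
    rw [map_add, map_smul, smul_eq_mul, hac] at this
    linarith
  have hpos := hmul_nonpos (δ / 2) (by rw [abs_of_pos] <;> linarith)
  have hneg := hmul_nonpos (-(δ / 2)) (by rw [abs_neg, abs_of_pos] <;> linarith)
  have hfv : f v = 0 := by nlinarith
  simpa using hfv

theorem Convex.combo_self_algCore_mem_algCore (hΩ : Convex ℝ Ω) {x a : X} (hx : x ∈ Ω)
    (ha : a ∈ algCore Ω) {r s : ℝ} (hr : 0 ≤ r) (hs : 0 < s) (hrs : r + s = 1) :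
    r • x + s • a ∈ algCore Ω := by
  refine ⟨hΩ hx ha.1 hr hs.le hrs, fun v => ?_⟩
  obtain ⟨δ, hδ, hmem⟩ := ha.2 v
  refine ⟨s * δ, by positivity, fun t ht => ?_⟩
  have hts : |t / s| < δ := by
    rwa [abs_div, abs_of_pos hs, div_lt_iff₀ hs, mul_comm]
  have hcombo : r • x + s • a + t • v = r • x + s • (a + (t / s) • v) := by
    rw [smul_add, smul_smul, mul_div_cancel₀ _ hs.ne', add_assoc]
  rw [hcombo]
  exact hΩ hx (hmem _ hts) hr hs.le hrs

theorem absorbent_of_zero_mem_algCore (h0 : (0 : X) ∈ algCore Ω) : Absorbent ℝ Ω := by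
  rw [absorbent_iff_eventually_nhdsNE_zero]
  intro v
  obtain ⟨δ, hδ, hmem⟩ := h0.2 v
  refine Filter.Eventually.filter_mono nhdsWithin_le_nhds ?_
  filter_upwards [Metric.ball_mem_nhds (0 : ℝ) hδ] with t ht
  simpa using hmem t (by simpa [Real.dist_eq] using ht)

theorem Convex.one_le_gauge_of_notMem_algCore (hΩ : Convex ℝ Ω) (h0 : (0 : X) ∈ algCore Ω)
    {y : X} (hy : y ∉ algCore Ω) : 1 ≤ gauge Ω y := by
  by_contra! hlt
  obtain ⟨r, hr0, hr1, z, hz, rfl⟩ := exists_lt_of_gauge_lt (absorbent_of_zero_mem_algCore h0) hlt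
  apply hy
  simpa using hΩ.combo_self_algCore_mem_algCore hz h0 hr0.le (sub_pos.2 hr1) (by ring)

theorem Convex.exists_linearMap_eq_one_of_notMem_algCore (hΩ : Convex ℝ Ω)
    (h0 : (0 : X) ∈ algCore Ω) {y : X} (hy : y ∉ algCore Ω) :
    ∃ f : X →ₗ[ℝ] ℝ, f y = 1 ∧ ∀ x ∈ Ω, f x ≤ 1 := by
  have hy0 : y ≠ 0 := fun h => hy (h ▸ h0)
  have habs := absorbent_of_zero_mem_algCore h0
  let f : X →ₗ.[ℝ] ℝ := LinearPMap.mkSpanSingleton y 1 hy0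
  obtain ⟨φ, hφf, hφle⟩ := exists_extension_of_le_sublinear f (gauge Ω)
    (fun c hc => gauge_smul_of_nonneg hc.le) (gauge_add_le hΩ habs) <| by
      rintro ⟨x, hx⟩
      obtain ⟨c, rfl⟩ := Submodule.mem_span_singleton.1 hx
      rw [LinearPMap.mkSpanSingleton'_apply, smul_eq_mul, mul_one]
      obtain hc | hc := le_or_gt c 0
      · exact hc.trans (gauge_nonneg _)
      · rw [gauge_smul_of_nonneg hc.le, smul_eq_mul]
        exact le_mul_of_one_le_right hc.le (hΩ.one_le_gauge_of_notMem_algCore h0 hy)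
  refine ⟨φ, ?_, fun x hx => (hφle x).trans (gauge_le_one_of_mem hx)⟩
  rw [← f.domain.coe_mk y (Submodule.mem_span_singleton_self _), hφf]
  exact LinearPMap.mkSpanSingleton'_apply_self _ _ _ _

theorem Convex.exists_linearMap_le_of_notMem_algCore (hΩ : Convex ℝ Ω) {a x₀ : X}
    (ha : a ∈ algCore Ω) (hx₀ : x₀ ∉ algCore Ω) :
    ∃ f : X →ₗ[ℝ] ℝ, f ≠ 0 ∧ ∀ x ∈ Ω, f x ≤ f x₀ := by
  obtain ⟨f, hfx₀, hfΩ⟩ := (hΩ.translate_preimage_right a).exists_linearMap_eq_one_of_notMem_algCore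
    (y := x₀ - a) (mem_algCore_preimage_add_left.2 (by simpa using ha))
    (by rwa [mem_algCore_preimage_add_left, add_sub_cancel])
  refine ⟨f, fun h => by simp [h] at hfx₀, fun x hx => ?_⟩
  have hfx := hfΩ (x - a) (by simpa using hx)
  rw [map_sub] at hfx hfx₀
  linarith

end

theorem proper_separation_characterization {X : Type*} [AddCommGroup X] [Module ℝ X]
    (Ω : Set X) (hΩ : Convex ℝ Ω) (hcore : (algCore Ω).Nonempty) (x₀ : X) :
    ((∃ f : X →ₗ[ℝ] ℝ, f ≠ 0 ∧ ∀ x ∈ Ω, f x ≤ f x₀) ↔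
      (∃ f : X →ₗ[ℝ] ℝ, f ≠ 0 ∧ (∀ x ∈ Ω, f x ≤ f x₀) ∧ ∃ xb ∈ Ω, f xb < f x₀)) ∧
    ((∃ f : X →ₗ[ℝ] ℝ, f ≠ 0 ∧ (∀ x ∈ Ω, f x ≤ f x₀) ∧ ∃ xb ∈ Ω, f xb < f x₀) ↔
      x₀ ∉ algCore Ω) := by
  obtain ⟨a, ha⟩ := hcore
  have proper_of_sep : (∃ f : X →ₗ[ℝ] ℝ, f ≠ 0 ∧ ∀ x ∈ Ω, f x ≤ f x₀) →
      ∃ f : X →ₗ[ℝ] ℝ, f ≠ 0 ∧ (∀ x ∈ Ω, f x ≤ f x₀) ∧ ∃ xb ∈ Ω, f xb < f x₀ :=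
    fun ⟨f, hf, hle⟩ => ⟨f, hf, hle, a, ha.1, f.apply_lt_of_mem_algCore hf hle ha⟩
  have notMem_of_sep : (∃ f : X →ₗ[ℝ] ℝ, f ≠ 0 ∧ ∀ x ∈ Ω, f x ≤ f x₀) → x₀ ∉ algCore Ω :=
    fun ⟨f, hf, hle⟩ hx₀ => (f.apply_lt_of_mem_algCore hf hle hx₀).false
  exact ⟨⟨proper_of_sep, fun ⟨f, hf, hle, _⟩ => ⟨f, hf, hle⟩⟩,
    fun ⟨f, hf, hle, _⟩ => notMem_of_sep ⟨f, hf, hle⟩,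
    fun hx₀ => proper_of_sep (hΩ.exists_linearMap_le_of_notMem_algCore ha hx₀)⟩
end

section
/- Let X be a real vector space and Ω ⊆ X convex. If a ∈ core(Ω) and b ∈ lin(Ω), then λ•a + (1−λ)•b ∈ core(Ω) for every λ with 0 < λ ≤ 1, i.e., the half-open interval [a,b) is contained in core(Ω). -/
/-- The algebraic closure (`lin`) of a set `Ω`. -/
def algLin {X : Type*} [AddCommGroup X] [Module ℝ X] (Ω : Set X) : Set X :=
  {x | ∃ w ∈ Ω, ∀ t : ℝ, 0 ≤ t → t < 1 → (1 - t) • w + t • x ∈ Ω}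

section AlgCore

variable {X : Type*} [AddCommGroup X] [Module ℝ X] {Ω : Set X} {a y : X}

theorem Convex.combo_algCore_self_mem_algCore (hΩ : Convex ℝ Ω) (ha : a ∈ algCore Ω)
    (hy : y ∈ Ω) {θ μ : ℝ} (hθ : 0 < θ) (hμ : 0 ≤ μ) (hθμ : θ + μ = 1) :
    θ • a + μ • y ∈ algCore Ω := by
  refine ⟨hΩ ha.1 hy hθ.le hμ hθμ, fun v => ?_⟩
  obtain ⟨δ, hδ, hmem⟩ := ha.2 v
  refine ⟨θ * δ, by positivity, fun t ht => ?_⟩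
  have hshift : a + (t / θ) • v ∈ Ω :=
    hmem _ (by rw [abs_div, abs_of_pos hθ, div_lt_iff₀ hθ]; linarith)
  convert hΩ hshift hy hθ.le hμ hθμ using 1
  rw [smul_add, smul_smul, mul_div_cancel₀ _ hθ.ne']
  abel

theorem Convex.exists_add_smul_mem_algCore (hΩ : Convex ℝ Ω) (ha : a ∈ algCore Ω) (u : X) :
    ∃ δ > (0 : ℝ), ∀ ε : ℝ, |ε| < δ → a + ε • u ∈ algCore Ω := by
  obtain ⟨δ, hδ, hmem⟩ := ha.2 u
  refine ⟨δ / 2, by positivity, fun ε hε => ?_⟩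
  have hfar : a + (2 * ε) • u ∈ Ω := hmem _ (by rw [abs_mul, abs_two]; linarith)
  convert hΩ.combo_algCore_self_mem_algCore ha hfar (θ := 1 / 2) (μ := 1 / 2)
    (by norm_num) (by norm_num) (by norm_num) using 1
  module

end AlgCore

theorem segment_core_lin {X : Type*} [AddCommGroup X] [Module ℝ X]
    (Ω : Set X) (hΩ : Convex ℝ Ω) (a b : X)
    (ha : a ∈ algCore Ω) (hb : b ∈ algLin Ω) :
    ∀ lam : ℝ, 0 < lam → lam ≤ 1 → lam • a + (1 - lam) • b ∈ algCore Ω := by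
  intro lam hlam hlam1
  obtain ⟨w, -, hseg⟩ := hb
  obtain ⟨δ, hδ, hcore⟩ := hΩ.exists_add_smul_mem_algCore ha (b - w)
  set t := min 1 (lam * δ / 2)
  have ht : 0 < t := lt_min one_pos (by positivity)
  have hnear : t • w + (1 - t) • b ∈ Ω := by
    simpa using hseg (1 - t) (by linarith [min_le_left 1 (lam * δ / 2)]) (by linarith)
  have hsmall : (1 - lam) * t ≤ lam * δ / 2 := calc
    (1 - lam) * t ≤ t := by nlinarith
    _ ≤ lam * δ / 2 := min_le_right _ _
  have hshift : a + ((1 - lam) * t / lam) • (b - w) ∈ algCore Ω := by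
    refine hcore _ ?_
    rw [abs_of_nonneg (by have := sub_nonneg.2 hlam1; positivity), div_lt_iff₀ hlam]
    nlinarith
  convert hΩ.combo_algCore_self_mem_algCore hshift hnear hlam (sub_nonneg.2 hlam1)
    (add_sub_cancel _ _) using 1
  rw [smul_add, smul_smul, mul_div_cancel₀ _ hlam.ne']
  module
end

section
/- (Algebraic cores of convex graphs.) Let X and Y be real vector spaces, F : X ⇉ Y a set-valued mapping whose graph gph(F) := {(x,y) | y ∈ F(x)} is a convex subset of X × Y, and suppose core(gph(F)) ≠ ∅. Then core(gph(F)) = {(x,y) ∈ X × Y | x ∈ core(dom(F)) and y ∈ core(F(x))}, where dom(F) := {x ∈ X | F(x) ≠ ∅}. -/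
/-- The graph of a set-valued mapping `F : X ⇉ Y`. -/
def gph {X Y : Type*} (F : X → Set Y) : Set (X × Y) := {p | p.2 ∈ F p.1}

/-- The domain of a set-valued mapping `F : X ⇉ Y`. -/
def dom {X Y : Type*} (F : X → Set Y) : Set X := {x | (F x).Nonempty}

/-! Convexity propagates core points along open segments: if `a ∈ core S` and `b ∈ S`, then
`]a, b[ ⊆ core S`. Conversely, stepping a little beyond a core point `x` away from any given
point shows that `x` lies in an open segment from that point to a point of the set.
Given `(x, y)` with `x ∈ core(dom F)` and `y ∈ core(F x)`, first go from a core point of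
`gph F` through `x` in the first coordinate to reach a core point `(x, y')`, then from
`(x, y')` through `y` along the fibre to reach `(x, y)`. -/

open Set

section

variable {X Y : Type*} [AddCommGroup X] [Module ℝ X] [AddCommGroup Y] [Module ℝ Y]

theorem Convex.openSegment_subset_algCore {S : Set X} (hS : Convex ℝ S) {a b : X}
    (ha : a ∈ algCore S) (hb : b ∈ S) : openSegment ℝ a b ⊆ algCore S := by
  rintro _ ⟨s, t, hs, ht, hst, rfl⟩
  refine ⟨hS ha.1 hb hs.le ht.le hst, fun v => ?_⟩
  obtain ⟨δ, hδ, hd⟩ := ha.2 v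
  refine ⟨s * δ, by positivity, fun r hr => ?_⟩
  have hmem : a + (r / s) • v ∈ S := hd _ <| by
    rwa [abs_div, abs_of_pos hs, div_lt_iff₀ hs, mul_comm]
  convert hS hmem hb hs.le ht.le hst using 1
  rw [smul_add, smul_smul, mul_div_cancel₀ _ hs.ne']
  abel

theorem exists_mem_openSegment_of_mem_algCore {A : Set X} {x : X} (hx : x ∈ algCore A)
    (x₀ : X) : ∃ u ∈ A, x ∈ openSegment ℝ x₀ u := by
  obtain ⟨δ, hδ, hd⟩ := hx.2 (x - x₀)
  have hδ2 : 0 < δ / 2 := by positivity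
  refine ⟨x + (δ / 2) • (x - x₀), hd _ (by rw [abs_of_pos hδ2]; linarith),
    (δ / 2) / (1 + δ / 2), 1 / (1 + δ / 2), by positivity, by positivity, by field_simp; ring, ?_⟩
  -- `x = (t • x₀ + u) / (1 + t)` for `u = x + t • (x - x₀)`, `t = δ / 2`
  match_scalars
  · field_simp
    ring
  · field_simp

theorem mem_algCore_dom_of_mem_algCore_gph {F : X → Set Y} {p : X × Y}
    (hp : p ∈ algCore (gph F)) : p.1 ∈ algCore (dom F) := by
  refine ⟨⟨p.2, hp.1⟩, fun v => ?_⟩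
  obtain ⟨δ, hδ, hd⟩ := hp.2 (v, 0)
  exact ⟨δ, hδ, fun t ht => ⟨p.2, by simpa [gph] using hd t ht⟩⟩

theorem mem_algCore_apply_of_mem_algCore_gph {F : X → Set Y} {p : X × Y}
    (hp : p ∈ algCore (gph F)) : p.2 ∈ algCore (F p.1) := by
  refine ⟨hp.1, fun w => ?_⟩
  obtain ⟨δ, hδ, hd⟩ := hp.2 (0, w)
  exact ⟨δ, hδ, fun t ht => by simpa [gph] using hd t ht⟩

end

theorem core_of_convex_graph {X Y : Type*} [AddCommGroup X] [Module ℝ X]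
    [AddCommGroup Y] [Module ℝ Y]
    (F : X → Set Y) (hF : Convex ℝ (gph F)) (hcore : (algCore (gph F)).Nonempty) :
    algCore (gph F) = {p : X × Y | p.1 ∈ algCore (dom F) ∧ p.2 ∈ algCore (F p.1)} := by
  ext ⟨x, y⟩
  refine ⟨fun h => ⟨mem_algCore_dom_of_mem_algCore_gph h,
    mem_algCore_apply_of_mem_algCore_gph h⟩, ?_⟩
  rintro ⟨hx, hy⟩
  obtain ⟨p₀, hp₀⟩ := hcore
  obtain ⟨u, ⟨w, hw⟩, hxu⟩ := exists_mem_openSegment_of_mem_algCore hx p₀.1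
  obtain ⟨⟨x', y'⟩, hp, hx' : x' = x⟩ :
      x ∈ (LinearMap.fst ℝ X Y).toAffineMap '' openSegment ℝ p₀ (u, w) := by
    rwa [image_openSegment]
  subst x'
  have hxy' : (x, y') ∈ algCore (gph F) := hF.openSegment_subset_algCore hp₀ hw hp
  obtain ⟨y'', hy'', hyy⟩ := exists_mem_openSegment_of_mem_algCore hy y'
  refine hF.openSegment_subset_algCore hxy' (show (x, y'') ∈ gph F from hy'') ?_
  rw [← Prod.image_mk_openSegment_right]
  exact mem_image_of_mem _ hyy
end

section
/- Let X be a real vector space and Ω₁, Ω₂ ⊆ X convex sets with core(Ω₁) ≠ ∅ and core(Ω₂) ≠ ∅. Then core(Ω₁ − Ω₂) = core(Ω₁) − core(Ω₂), where Ω₁ − Ω₂ := {x₁ − x₂ | x₁ ∈ Ω₁, x₂ ∈ Ω₂}. -/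
open Pointwise

/-!
The inclusion `⊇` holds for arbitrary sets: translating by `b ∈ Ω₂` carries the lines through a
core point of `Ω₁` into `Ω₁ - Ω₂`. For `⊆`, fix `cᵢ ∈ algCore Ωᵢ`. A core point `x` of `Ω₁ - Ω₂` can
be pushed slightly beyond itself, away from `c₁ - c₂`, without leaving `Ω₁ - Ω₂`; hence
`x = (1 - l) • (a - b) + l • (c₁ - c₂)` with `a ∈ Ω₁`, `b ∈ Ω₂`, `0 < l < 1`. In a convex set, such a
combination of a point with a core point is again a core point, which splits `x` as required.
-/

section

variable {X : Type*} [AddCommGroup X] [Module ℝ X]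

theorem algCore_subset (Ω : Set X) : algCore Ω ⊆ Ω := fun _ hx => hx.1

theorem algCore_sub_subset (Ω₁ Ω₂ : Set X) : algCore Ω₁ - Ω₂ ⊆ algCore (Ω₁ - Ω₂) := by
  rintro _ ⟨a, ha, b, hb, rfl⟩
  refine ⟨Set.sub_mem_sub ha.1 hb, fun v => ?_⟩
  obtain ⟨δ, hδ, hmem⟩ := ha.2 v
  exact ⟨δ, hδ, fun t ht => ⟨a + t • v, hmem t ht, b, hb, add_sub_right_comm _ _ _⟩⟩

theorem exists_combo_eq_of_mem_algCore {Ω : Set X} {x : X} (hx : x ∈ algCore Ω) (c : X) :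
    ∃ y ∈ Ω, ∃ l : ℝ, 0 < l ∧ l < 1 ∧ (1 - l) • y + l • c = x := by
  obtain ⟨δ, hδ, hmem⟩ := hx.2 (x - c)
  have ht : 0 < δ / 2 := by positivity
  refine ⟨x + (δ / 2) • (x - c), hmem _ (by rw [abs_of_pos ht]; linarith),
    (δ / 2) / (1 + δ / 2), by positivity, by rw [div_lt_one (by linarith)]; linarith, ?_⟩
  have : (1 : ℝ) + δ / 2 ≠ 0 := by linarith
  match_scalars <;> field_simp <;> ring

theorem Convex.combo_self_algCore_mem_algCore_s12 {Ω : Set X} (hΩ : Convex ℝ Ω) {a c : X} (ha : a ∈ Ω)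
    (hc : c ∈ algCore Ω) {l : ℝ} (hl₀ : 0 < l) (hl₁ : l ≤ 1) :
    (1 - l) • a + l • c ∈ algCore Ω := by
  refine ⟨hΩ ha hc.1 (by linarith) hl₀.le (by ring), fun v => ?_⟩
  obtain ⟨δ, hδ, hmem⟩ := hc.2 v
  refine ⟨l * δ, by positivity, fun t ht => ?_⟩
  have hs : |t / l| < δ := by
    rw [abs_div, abs_of_pos hl₀, div_lt_iff₀ hl₀]
    linarith
  have hcomb : (1 - l) • a + l • (c + (t / l) • v) ∈ Ω :=
    hΩ ha (hmem _ hs) (by linarith) hl₀.le (by ring)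
  rwa [smul_add, smul_smul, mul_div_cancel₀ t hl₀.ne', ← add_assoc] at hcomb

theorem algCore_sub_subset_sub_algCore {Ω₁ Ω₂ : Set X} (h₁ : Convex ℝ Ω₁) (h₂ : Convex ℝ Ω₂)
    {c₁ c₂ : X} (hc₁ : c₁ ∈ algCore Ω₁) (hc₂ : c₂ ∈ algCore Ω₂) :
    algCore (Ω₁ - Ω₂) ⊆ algCore Ω₁ - algCore Ω₂ := by
  intro x hx
  obtain ⟨_, ⟨a, ha, b, hb, rfl⟩, l, hl₀, hl₁, rfl⟩ := exists_combo_eq_of_mem_algCore hx (c₁ - c₂)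
  refine ⟨_, h₁.combo_self_algCore_mem_algCore_s12 ha hc₁ hl₀ hl₁.le,
    _, h₂.combo_self_algCore_mem_algCore_s12 hb hc₂ hl₀ hl₁.le, ?_⟩
  module

end

theorem core_sub {X : Type*} [AddCommGroup X] [Module ℝ X]
    (Ω₁ Ω₂ : Set X) (h₁ : Convex ℝ Ω₁) (h₂ : Convex ℝ Ω₂)
    (hc₁ : (algCore Ω₁).Nonempty) (hc₂ : (algCore Ω₂).Nonempty) :
    algCore (Ω₁ - Ω₂) = algCore Ω₁ - algCore Ω₂ := by
  obtain ⟨c₁, hc₁⟩ := hc₁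
  obtain ⟨c₂, hc₂⟩ := hc₂
  refine (algCore_sub_subset_sub_algCore h₁ h₂ hc₁ hc₂).antisymm ?_
  calc algCore Ω₁ - algCore Ω₂ ⊆ algCore Ω₁ - Ω₂ := Set.sub_subset_sub_left (algCore_subset Ω₂)
    _ ⊆ algCore (Ω₁ - Ω₂) := algCore_sub_subset Ω₁ Ω₂
end

section
/- (Coderivative sum rule.) Let X and Y be real vector spaces and F₁, F₂ : X ⇉ Y set-valued mappings with convex graphs such that there exists (x, y₁, y₂) ∈ X × Y × Y with (x, y₁) ∈ core(gph(F₁)) and (x, y₂) ∈ core(gph(F₂)). Then for every (x̄, ȳ) ∈ gph(F₁ + F₂), every linear g : Y → ℝ, and every pair (ȳ₁, ȳ₂) with ȳ = ȳ₁ + ȳ₂, ȳ₁ ∈ F₁(x̄), ȳ₂ ∈ F₂(x̄), one has D*(F₁+F₂)(x̄,ȳ)(g) = D*F₁(x̄,ȳ₁)(g) + D*F₂(x̄,ȳ₂)(g), where the right-hand side is the set of sums f₁ + f₂ with f_i ∈ D*F_i(x̄,ȳ_i)(g). -/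
/-- The coderivative of a set-valued mapping `F` at `(xb, yb) ∈ gph F`:
`f ∈ D*F(xb,yb)(g)` iff `(f, -g)` belongs to the normal cone of `gph F` at `(xb, yb)`. -/
def coderiv {X Y : Type*} [AddCommGroup X] [Module ℝ X] [AddCommGroup Y] [Module ℝ Y]
    (F : X → Set Y) (xb : X) (yb : Y) (g : Y →ₗ[ℝ] ℝ) : Set (X →ₗ[ℝ] ℝ) :=
  {f | yb ∈ F xb ∧ ∀ x : X, ∀ y ∈ F x, f (x - xb) - g (y - yb) ≤ 0}

/-- The sum of two set-valued mappings. -/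
def svSum {X Y : Type*} [AddCommGroup Y] (F₁ F₂ : X → Set Y) : X → Set Y :=
  fun x => {y | ∃ y₁ ∈ F₁ x, ∃ y₂ ∈ F₂ x, y = y₁ + y₂}

theorem PointedCone.eq_zero_or_mem_convexConeHull_of_mem_hull {R E : Type*} [Semiring R]
    [PartialOrder R] [IsOrderedRing R] [AddCommMonoid E] [Module R E] {s : Set E} {x : E}
    (hx : x ∈ PointedCone.hull R s) : x = 0 ∨ x ∈ ConvexCone.hull R s := by
  induction hx using Submodule.span_induction with
  | mem x hx => exact .inr (ConvexCone.subset_hull hx)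
  | zero => exact .inl rfl
  | add x y _ _ hx hy =>
    rcases hx with rfl | hx
    · rwa [zero_add]
    rcases hy with rfl | hy
    · rw [add_zero]; exact .inr hx
    exact .inr ((ConvexCone.hull R s).add_mem hx hy)
  | smul c x _ hx =>
    rcases hx with rfl | hx
    · exact .inl (smul_zero c)
    rcases c.2.eq_or_lt with hc | hc
    · exact .inl (by rw [Nonneg.mk_smul, ← hc, zero_smul])
    · exact .inr ((ConvexCone.hull R s).smul_mem hc hx)

theorem PointedCone.exists_linearMap_add_nonneg {X : Type*} [AddCommGroup X] [Module ℝ X]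
    (K : PointedCone ℝ (X × ℝ)) (hK₀ : ∀ r : ℝ, (0, r) ∈ K → 0 ≤ r)
    (hK : ∀ u : X, ∃ r : ℝ, (u, r) ∈ K) :
    ∃ φ : X →ₗ[ℝ] ℝ, ∀ z ∈ K, 0 ≤ φ z.1 + z.2 := by
  let p := LinearMap.ker (LinearMap.fst ℝ X ℝ)
  have hp : ∀ r : ℝ, ((0, r) : X × ℝ) ∈ p := fun r => rfl
  -- extend `(0, r) ↦ r` from `{0} × ℝ` to a linear functional that is nonnegative on `K`
  obtain ⟨ψ, hψ, hψK⟩ := riesz_extension K ((LinearMap.snd ℝ X ℝ).toPMap p)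
    (fun ⟨⟨u, r⟩, (hu : u = 0)⟩ hz => hK₀ r (hu ▸ hz))
    (fun ⟨u, r⟩ => by
      obtain ⟨r', hr'⟩ := hK u
      exact ⟨⟨(0, r' - r), hp _⟩, by simpa using hr'⟩)
  refine ⟨ψ ∘ₗ LinearMap.inl ℝ X ℝ, fun z hz => ?_⟩
  have hsnd : ψ (0, z.2) = z.2 := hψ ⟨(0, z.2), hp _⟩
  calc 0 ≤ ψ z := hψK z hz
    _ = ψ (z.1, 0) + ψ (0, z.2) := by rw [← map_add, Prod.mk_add_mk, add_zero, zero_add]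
    _ = _ := by rw [hsnd]; rfl

theorem Convex.exists_linearMap_add_nonneg {X : Type*} [AddCommGroup X] [Module ℝ X]
    {D : Set (X × ℝ)} (hD : Convex ℝ D) (hD₀ : ∀ r : ℝ, (0, r) ∈ D → 0 ≤ r)
    (hD_abs : ∀ u : X, ∃ t > (0 : ℝ), ∃ r : ℝ, (t • u, r) ∈ D) :
    ∃ φ : X →ₗ[ℝ] ℝ, ∀ z ∈ D, 0 ≤ φ z.1 + z.2 := by
  obtain ⟨φ, hφ⟩ := (PointedCone.hull ℝ D).exists_linearMap_add_nonneg
    (fun r hr => by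
      rcases PointedCone.eq_zero_or_mem_convexConeHull_of_mem_hull hr with h | h
      · exact (Prod.ext_iff.1 h).2.ge
      obtain ⟨c, hc, d, hd, hdr⟩ := (ConvexCone.mem_hull_of_convex hD).1 h
      obtain ⟨hd₁ : c • d.1 = 0, hd₂ : c • d.2 = r⟩ := Prod.ext_iff.1 hdr
      rw [smul_eq_zero_iff_right hc.ne'] at hd₁
      rw [← hd₂]
      exact smul_nonneg hc.le (hD₀ d.2 (hd₁ ▸ hd)))
    (fun u => by
      obtain ⟨t, ht, r, hr⟩ := hD_abs u
      refine ⟨t⁻¹ * r, ?_⟩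
      have := (PointedCone.hull ℝ D).smul_mem (inv_nonneg.2 ht.le) (PointedCone.subset_hull hr)
      simpa [smul_smul, ht.ne'] using this)
  exact ⟨φ, fun z hz => hφ z (PointedCone.subset_hull hz)⟩

section SumRule

variable {X Y : Type*} [AddCommGroup X] [Module ℝ X] [AddCommGroup Y] [Module ℝ Y]
  {F₁ F₂ : X → Set Y} {xb : X} {yb₁ yb₂ : Y} {g : Y →ₗ[ℝ] ℝ} {f : X →ₗ[ℝ] ℝ}

theorem add_mem_coderiv_svSum {f₁ f₂ : X →ₗ[ℝ] ℝ} (hf₁ : f₁ ∈ coderiv F₁ xb yb₁ g)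
    (hf₂ : f₂ ∈ coderiv F₂ xb yb₂ g) : f₁ + f₂ ∈ coderiv (svSum F₁ F₂) xb (yb₁ + yb₂) g := by
  refine ⟨⟨yb₁, hf₁.1, yb₂, hf₂.1, rfl⟩, ?_⟩
  rintro x _ ⟨y₁, hy₁, y₂, hy₂, rfl⟩
  have h₁ := hf₁.2 x y₁ hy₁
  have h₂ := hf₂.2 x y₂ hy₂
  rw [add_sub_add_comm, map_add, LinearMap.add_apply]
  linarith

variable (F₁ F₂ xb yb₁ yb₂ g f) in
def sumRuleSet : Set (X × ℝ) :=
  {z | ∃ p ∈ gph F₁, ∃ q ∈ gph F₂,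
    z = (p.1 - q.1, g (p.2 - yb₁) - f (q.1 - xb) + g (q.2 - yb₂))}

theorem convex_sumRuleSet (h₁ : Convex ℝ (gph F₁)) (h₂ : Convex ℝ (gph F₂)) :
    Convex ℝ (sumRuleSet F₁ F₂ xb yb₁ yb₂ g f) := by
  rintro _ ⟨p, hp, q, hq, rfl⟩ _ ⟨p', hp', q', hq', rfl⟩ a b ha hb hab
  refine ⟨a • p + b • p', h₁ hp hp' ha hb hab, a • q + b • q', h₂ hq hq' ha hb hab, ?_⟩
  simp only [Prod.smul_mk, Prod.mk_add_mk, Prod.fst_add, Prod.snd_add, Prod.smul_fst,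
    Prod.smul_snd, map_sub, map_add, map_smul, smul_eq_mul, Prod.mk.injEq]
  constructor
  · module
  · linear_combination (f xb - g yb₁ - g yb₂) * hab

theorem nonneg_of_zero_mem_sumRuleSet (hf : f ∈ coderiv (svSum F₁ F₂) xb (yb₁ + yb₂) g)
    {r : ℝ} (hr : (0, r) ∈ sumRuleSet F₁ F₂ xb yb₁ yb₂ g f) : 0 ≤ r := by
  obtain ⟨⟨x₁, y₁⟩, hp, ⟨x₂, y₂⟩, hq, hpq⟩ := hr
  obtain ⟨hx, rfl⟩ := Prod.ext_iff.1 hpq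
  obtain rfl : x₁ = x₂ := sub_eq_zero.1 hx.symm
  have := hf.2 x₁ (y₁ + y₂) ⟨y₁, hp, y₂, hq, rfl⟩
  simp only [map_sub, map_add] at this ⊢
  linarith

theorem exists_smul_mem_sumRuleSet {x₀ : X} {y₀₁ y₀₂ : Y}
    (hcore : (x₀, y₀₁) ∈ algCore (gph F₁)) (h₀ : y₀₂ ∈ F₂ x₀) (u : X) :
    ∃ t > (0 : ℝ), ∃ r : ℝ, (t • u, r) ∈ sumRuleSet F₁ F₂ xb yb₁ yb₂ g f := by
  obtain ⟨δ, hδ, hδu⟩ := hcore.2 (u, 0)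
  have hu : (x₀ + (δ / 2) • u, y₀₁) ∈ gph F₁ := by
    simpa using hδu (δ / 2) (by rw [abs_of_pos (half_pos hδ)]; exact half_lt_self hδ)
  exact ⟨δ / 2, half_pos hδ, g (y₀₁ - yb₁) - f (x₀ - xb) + g (y₀₂ - yb₂), _, hu, (x₀, y₀₂), h₀,
    by rw [add_sub_cancel_left]⟩

theorem exists_add_eq_of_mem_coderiv_svSum (h₁ : Convex ℝ (gph F₁)) (h₂ : Convex ℝ (gph F₂))
    {x₀ : X} {y₀₁ y₀₂ : Y} (hcore : (x₀, y₀₁) ∈ algCore (gph F₁)) (h₀ : y₀₂ ∈ F₂ x₀)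
    (hb₁ : yb₁ ∈ F₁ xb) (hb₂ : yb₂ ∈ F₂ xb) (hf : f ∈ coderiv (svSum F₁ F₂) xb (yb₁ + yb₂) g) :
    ∃ f₁ ∈ coderiv F₁ xb yb₁ g, ∃ f₂ ∈ coderiv F₂ xb yb₂ g, f = f₁ + f₂ := by
  obtain ⟨φ, hφ⟩ := (convex_sumRuleSet h₁ h₂).exists_linearMap_add_nonneg
    (fun _ => nonneg_of_zero_mem_sumRuleSet hf) (exists_smul_mem_sumRuleSet hcore h₀)
  refine ⟨-φ, ⟨hb₁, fun x y hy => ?_⟩, f + φ, ⟨hb₂, fun x y hy => ?_⟩, by abel⟩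
  · have := hφ _ ⟨(x, y), hy, (xb, yb₂), hb₂, rfl⟩
    simp only [sub_self, map_zero, sub_zero, add_zero] at this
    rw [LinearMap.neg_apply]
    linarith
  · have := hφ _ ⟨(xb, yb₁), hb₁, (x, y), hy, rfl⟩
    rw [← neg_sub, map_neg] at this
    simp only [sub_self, map_zero, zero_sub] at this
    rw [LinearMap.add_apply]
    linarith

end SumRule

theorem coderivative_sum_rule {X Y : Type*} [AddCommGroup X] [Module ℝ X]
    [AddCommGroup Y] [Module ℝ Y] (F₁ F₂ : X → Set Y)
    (h₁ : Convex ℝ (gph F₁)) (h₂ : Convex ℝ (gph F₂))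
    (hqc : ∃ x : X, ∃ y₁ y₂ : Y,
      (x, y₁) ∈ algCore (gph F₁) ∧ (x, y₂) ∈ algCore (gph F₂)) :
    ∀ xb : X, ∀ yb : Y, yb ∈ svSum F₁ F₂ xb → ∀ g : Y →ₗ[ℝ] ℝ,
      ∀ yb₁ yb₂ : Y, yb₁ ∈ F₁ xb → yb₂ ∈ F₂ xb → yb = yb₁ + yb₂ →
        coderiv (svSum F₁ F₂) xb yb g
          = {f | ∃ f₁ ∈ coderiv F₁ xb yb₁ g, ∃ f₂ ∈ coderiv F₂ xb yb₂ g,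
              f = f₁ + f₂} := by
  rintro xb _ - g yb₁ yb₂ hb₁ hb₂ rfl
  obtain ⟨x₀, y₀₁, y₀₂, hcore, ⟨h₀, -⟩⟩ := hqc
  ext f
  constructor
  · exact exists_add_eq_of_mem_coderiv_svSum h₁ h₂ hcore h₀ hb₁ hb₂
  · rintro ⟨f₁, hf₁, f₂, hf₂, rfl⟩
    exact add_mem_coderiv_svSum hf₁ hf₂
end

section
/- (Coderivative chain rule.) Let X, Y, Z be real vector spaces and F : X ⇉ Y, G : Y ⇉ Z set-valued mappings with convex graphs such that there exists (x, y, z) ∈ X × Y × Z with (x,y) ∈ core(gph(F)) and (y,z) ∈ core(gph(G)). Then for every (x̄, z̄) ∈ gph(G∘F), every linear h : Z → ℝ, and every ȳ ∈ F(x̄) ∩ G⁻¹(z̄), one has D*(G∘F)(x̄,z̄)(h) = (D*F(x̄,ȳ) ∘ D*G(ȳ,z̄))(h), i.e., f ∈ D*(G∘F)(x̄,z̄)(h) iff there exists a linear g : Y → ℝ with g ∈ D*G(ȳ,z̄)(h) and f ∈ D*F(x̄,ȳ)(g). -/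
/-- The composition of set-valued mappings. -/
def svComp {X Y Z : Type*} (G : Y → Set Z) (F : X → Set Y) : X → Set Z :=
  fun x => {z | ∃ y ∈ F x, z ∈ G y}

/-! The inclusion `⊇` follows by adding the two defining inequalities. For `⊆`, fix
`f ∈ D*(G ∘ F)(x̄, z̄)(h)` and consider the set `C ⊆ Y × ℝ` of pairs `(y₂ - y₁, t)` with
`(x₁, y₁) ∈ gph F`, `(y₂, z₂) ∈ gph G` and `t ≥ h (z₂ - z̄) - f (x₁ - x̄)`. It is convex, it
meets the axis `{0} × ℝ` only in `[0, ∞)` because `f` is a coderivative of `G ∘ F`, and, since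
`gph G` has a point in its algebraic core, every vector of `Y × ℝ` lies in the cone over `C`
after a vertical shift. The Riesz extension theorem then gives a linear `ℓ` on `Y × ℝ`,
nonnegative on `C`, with `ℓ (0, 1) = 1`, and `g := -ℓ (·, 0)` is the required multiplier. -/

theorem PointedCone.exists_linearMap_eq_one_nonneg {E : Type*} [AddCommGroup E] [Module ℝ E]
    (K : PointedCone ℝ E) {e : E} (he : ∀ r : ℝ, r • e ∈ K → 0 ≤ r)
    (hK : ∀ p, ∃ t : ℝ, t • e + p ∈ K) :
    ∃ ℓ : E →ₗ[ℝ] ℝ, ℓ e = 1 ∧ ∀ p ∈ K, 0 ≤ ℓ p := by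
  have he0 : e ≠ 0 := by
    rintro rfl
    have := he (-1) (by simp)
    norm_num at this
  set ℓ₀ := LinearPMap.mkSpanSingleton (K := ℝ) (σ := RingHom.id ℝ) e (1 : ℝ) he0
  have hℓ₀ : ∀ x : ℓ₀.domain, (x : E) ∈ K → 0 ≤ ℓ₀ x := by
    rintro ⟨x, hx⟩ hxK
    obtain ⟨c, rfl⟩ := Submodule.mem_span_singleton.1 hx
    rw [LinearPMap.mkSpanSingleton'_apply, smul_eq_mul, mul_one]
    exact he c hxK
  have hdense : ∀ p, ∃ x : ℓ₀.domain, (x : E) + p ∈ K := fun p ↦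
    let ⟨t, ht⟩ := hK p
    ⟨⟨t • e, Submodule.smul_mem _ t (Submodule.mem_span_singleton_self e)⟩, ht⟩
  obtain ⟨ℓ, hℓ, hℓK⟩ := riesz_extension K ℓ₀ hℓ₀ hdense
  exact ⟨ℓ, (hℓ ⟨e, Submodule.mem_span_singleton_self e⟩).trans
    (LinearPMap.mkSpanSingleton_apply ℝ ℝ he0 1), hℓK⟩

theorem Convex.exists_linearMap_eq_one_nonneg {E : Type*} [AddCommGroup E] [Module ℝ E]
    {C : Set E} (hC : Convex ℝ C) (h0 : (0 : E) ∈ C) {e : E}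
    (he : ∀ r : ℝ, r • e ∈ C → 0 ≤ r)
    (hdense : ∀ p, ∃ t : ℝ, ∃ τ > (0 : ℝ), τ • (t • e + p) ∈ C) :
    ∃ ℓ : E →ₗ[ℝ] ℝ, ℓ e = 1 ∧ ∀ p ∈ C, 0 ≤ ℓ p := by
  set K := (ConvexCone.hull ℝ C).toPointedCone (ConvexCone.subset_hull h0)
  have hKe : ∀ r : ℝ, r • e ∈ K → 0 ≤ r := by
    intro r hr
    obtain ⟨τ, hτ, c, hc, hτc⟩ := (ConvexCone.mem_hull_of_convex hC).1 hr
    have hce : c = (r / τ) • e := by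
      rw [div_eq_inv_mul, mul_smul, ← hτc, inv_smul_smul₀ hτ.ne']
    simpa using (le_div_iff₀ hτ).1 (he (r / τ) (hce ▸ hc))
  have hK : ∀ p, ∃ t : ℝ, t • e + p ∈ K := by
    intro p
    obtain ⟨t, τ, hτ, hmem⟩ := hdense p
    exact ⟨t, (ConvexCone.mem_hull_of_convex hC).2
      ⟨τ⁻¹, inv_pos.2 hτ, _, hmem, inv_smul_smul₀ hτ.ne' _⟩⟩
  obtain ⟨ℓ, hℓe, hℓK⟩ := K.exists_linearMap_eq_one_nonneg hKe hK
  exact ⟨ℓ, hℓe, fun p hp ↦ hℓK p (ConvexCone.subset_hull hp)⟩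

section ChainRule

variable {X Y Z : Type*} [AddCommGroup X] [Module ℝ X] [AddCommGroup Y] [AddCommGroup Z]
  [Module ℝ Z] {F : X → Set Y} {G : Y → Set Z}
  {x₀ xb : X} {y₀ yb : Y} {z₀ zb : Z} {h : Z →ₗ[ℝ] ℝ} {f : X →ₗ[ℝ] ℝ}

def chainEpigraph (F : X → Set Y) (G : Y → Set Z) (xb : X) (zb : Z) (h : Z →ₗ[ℝ] ℝ)
    (f : X →ₗ[ℝ] ℝ) : Set (Y × ℝ) :=
  {p | ∃ x₁ y₁ y₂ z₂, y₁ ∈ F x₁ ∧ z₂ ∈ G y₂ ∧ y₂ - y₁ = p.1 ∧ h (z₂ - zb) - f (x₁ - xb) ≤ p.2}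

theorem convex_chainEpigraph [Module ℝ Y] (hF : Convex ℝ (gph F)) (hG : Convex ℝ (gph G)) :
    Convex ℝ (chainEpigraph F G xb zb h f) := by
  rintro ⟨_, t⟩ ⟨x₁, y₁, y₂, z₂, h₁, h₂, rfl, ht⟩ ⟨_, t'⟩ ⟨x₁', y₁', y₂', z₂', h₁', h₂', rfl, ht'⟩
    a b ha hb hab
  refine ⟨a • x₁ + b • x₁', a • y₁ + b • y₁', a • y₂ + b • y₂', a • z₂ + b • z₂',
    hF (x := (x₁, y₁)) (y := (x₁', y₁')) h₁ h₁' ha hb hab,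
    hG (x := (y₂, z₂)) (y := (y₂', z₂')) h₂ h₂' ha hb hab,
    by simp only [Prod.fst_add, Prod.smul_fst]; module, ?_⟩
  have hcombo : h (a • z₂ + b • z₂' - zb) - f (a • x₁ + b • x₁' - xb)
      = a * (h (z₂ - zb) - f (x₁ - xb)) + b * (h (z₂' - zb) - f (x₁' - xb)) := by
    simp only [map_sub, map_add, map_smul, smul_eq_mul]
    linear_combination (h zb - f xb) * hab
  rw [hcombo]
  exact add_le_add (mul_le_mul_of_nonneg_left ht ha) (mul_le_mul_of_nonneg_left ht' hb)

theorem zero_mem_chainEpigraph (hy : yb ∈ F xb) (hz : zb ∈ G yb) :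
    (0 : Y × ℝ) ∈ chainEpigraph F G xb zb h f :=
  ⟨xb, yb, yb, zb, hy, hz, sub_self yb, by simp⟩

theorem nonneg_of_mem_chainEpigraph (hf : f ∈ coderiv (svComp G F) xb zb h) {r : ℝ}
    (hr : ((0 : Y), r) ∈ chainEpigraph F G xb zb h f) : 0 ≤ r := by
  obtain ⟨x₁, y₁, y₂, z₂, h₁, h₂, hy, hr⟩ := hr
  have := hf.2 x₁ z₂ ⟨y₁, h₁, sub_eq_zero.1 hy ▸ h₂⟩
  linarith

theorem exists_smul_mem_chainEpigraph [Module ℝ Y] (hy₀ : y₀ ∈ F x₀)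
    (hz₀ : (y₀, z₀) ∈ algCore (gph G)) (p : Y × ℝ) :
    ∃ t : ℝ, ∃ τ > (0 : ℝ), τ • (t • ((0 : Y), (1 : ℝ)) + p) ∈ chainEpigraph F G xb zb h f := by
  obtain ⟨u, r⟩ := p
  obtain ⟨δ, hδ, hδG⟩ := hz₀.2 (u, 0)
  obtain ⟨τ, hτ, hτδ⟩ : ∃ τ, 0 < τ ∧ τ < δ := ⟨δ / 2, half_pos hδ, half_lt_self hδ⟩
  have hGτ : z₀ ∈ G (y₀ + τ • u) := by
    simpa [gph] using hδG τ (by rwa [abs_of_pos hτ])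
  -- `t` makes the height exactly the value `h (z₀ - zb) - f (x₀ - xb)` attained at
  -- `(x₀, y₀) ∈ gph F` and `(y₀ + τ • u, z₀) ∈ gph G`.
  refine ⟨(h (z₀ - zb) - f (x₀ - xb)) / τ - r, τ, hτ,
    x₀, y₀, y₀ + τ • u, z₀, hy₀, hGτ, by simp, ?_⟩
  simp [mul_div_cancel₀ _ hτ.ne']

theorem exists_linearMap_le_of_mem_coderiv_svComp [Module ℝ Y] (hF : Convex ℝ (gph F))
    (hG : Convex ℝ (gph G)) (hy₀ : y₀ ∈ F x₀) (hz₀ : (y₀, z₀) ∈ algCore (gph G))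
    (hy : yb ∈ F xb) (hz : zb ∈ G yb) (hf : f ∈ coderiv (svComp G F) xb zb h) :
    ∃ g : Y →ₗ[ℝ] ℝ, ∀ x₁, ∀ y₁ ∈ F x₁, ∀ y₂, ∀ z₂ ∈ G y₂,
      g (y₂ - y₁) ≤ h (z₂ - zb) - f (x₁ - xb) := by
  obtain ⟨ℓ, hℓe, hℓC⟩ := (convex_chainEpigraph hF hG).exists_linearMap_eq_one_nonneg
    (zero_mem_chainEpigraph hy hz) (fun r hr ↦ nonneg_of_mem_chainEpigraph hf (by simpa using hr))
    (exists_smul_mem_chainEpigraph hy₀ hz₀)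
  refine ⟨-(ℓ ∘ₗ LinearMap.inl ℝ Y ℝ), fun x₁ y₁ h₁ y₂ z₂ h₂ ↦ ?_⟩
  set t := h (z₂ - zb) - f (x₁ - xb)
  have hsplit : (y₂ - y₁, t) = LinearMap.inl ℝ Y ℝ (y₂ - y₁) + t • ((0 : Y), (1 : ℝ)) := by
    ext <;> simp
  have hℓ := hℓC (y₂ - y₁, t) ⟨x₁, y₁, y₂, z₂, h₁, h₂, rfl, le_rfl⟩
  rw [hsplit, map_add, map_smul, hℓe, smul_eq_mul, mul_one] at hℓ
  simp only [LinearMap.neg_apply, LinearMap.coe_comp, Function.comp_apply]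
  linarith

theorem exists_mem_coderiv_of_mem_coderiv_svComp [Module ℝ Y] (hF : Convex ℝ (gph F))
    (hG : Convex ℝ (gph G)) (hy₀ : y₀ ∈ F x₀) (hz₀ : (y₀, z₀) ∈ algCore (gph G))
    (hy : yb ∈ F xb) (hz : zb ∈ G yb) (hf : f ∈ coderiv (svComp G F) xb zb h) :
    ∃ g : Y →ₗ[ℝ] ℝ, g ∈ coderiv G yb zb h ∧ f ∈ coderiv F xb yb g := by
  obtain ⟨g, hg⟩ := exists_linearMap_le_of_mem_coderiv_svComp hF hG hy₀ hz₀ hy hz hf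
  refine ⟨g, ⟨hz, fun y z hyz ↦ ?_⟩, hy, fun x y hxy ↦ ?_⟩
  · simpa using hg xb yb hy y z hyz
  · have := hg x y hxy yb zb hz
    rw [← neg_sub, map_neg] at this
    simp only [sub_self, map_zero, zero_sub] at this
    linarith

theorem mem_coderiv_svComp [Module ℝ Y] {g : Y →ₗ[ℝ] ℝ} (hg : g ∈ coderiv G yb zb h)
    (hf : f ∈ coderiv F xb yb g) : f ∈ coderiv (svComp G F) xb zb h := by
  refine ⟨⟨yb, hf.1, hg.1⟩, ?_⟩
  rintro x z ⟨y, hxy, hyz⟩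
  linarith [hf.2 x y hxy, hg.2 y z hyz]

end ChainRule

theorem coderivative_chain_rule {X Y Z : Type*} [AddCommGroup X] [Module ℝ X]
    [AddCommGroup Y] [Module ℝ Y] [AddCommGroup Z] [Module ℝ Z]
    (F : X → Set Y) (G : Y → Set Z)
    (hF : Convex ℝ (gph F)) (hG : Convex ℝ (gph G))
    (hqc : ∃ (x : X) (y : Y) (z : Z),
      (x, y) ∈ algCore (gph F) ∧ (y, z) ∈ algCore (gph G)) :
    ∀ xb : X, ∀ zb : Z, zb ∈ svComp G F xb → ∀ h : Z →ₗ[ℝ] ℝ,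
      ∀ yb : Y, yb ∈ F xb → zb ∈ G yb →
        coderiv (svComp G F) xb zb h
          = {f | ∃ g : Y →ₗ[ℝ] ℝ, g ∈ coderiv G yb zb h ∧ f ∈ coderiv F xb yb g} := by
  intro xb zb _ h yb hy hz
  obtain ⟨x₀, y₀, z₀, hxy₀, hyz₀⟩ := hqc
  ext f
  exact ⟨exists_mem_coderiv_of_mem_coderiv_svComp hF hG hxy₀.1 hyz₀ hy hz,
    fun ⟨_, hg, hf⟩ ↦ mem_coderiv_svComp hg hf⟩
end
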